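/- arXiv:1310.5020 — 3 statements merged into one kernel-verified Lean document; each statement's English description precedes it below -/
import Mathlib

section
/- Let V be a complete discrete valuation ring with fraction field K and algebraically closed residue field k, and let B be an integral domain that is a finitely generated V-algebra such that the reduction of B ⊗_V k is isomorphic to k (i.e., Spec(B ⊗_V k) is a single reduced point) and B ⊗_V K ≠ 0. Then B ⊗_V K is a finite field extension of K. -/
/-!
Since `V` is complete and `B` is a Noetherian domain, hence `𝔪`-adically separated, the complete
Nakayama lemma shows that `B` is a finite `V`-module as soon as the special fibre `k ⊗[V] B` is
finite over `k`; and the special fibre, whose reduction is a field, has dimension zero and is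
therefore finite over `k`. The generic fibre `K ⊗[V] B` is then a nonzero localization of the
domain `B` that is finite over the field `K`, hence a field.
-/

open TensorProduct

theorem SModEq.map_smul_top {R M N : Type*} [CommRing R] [AddCommGroup M] [Module R M]
    [AddCommGroup N] [Module R N] {J : Ideal R} {x y : M}
    (h : x ≡ y [SMOD (J • ⊤ : Submodule R M)]) (f : M →ₗ[R] N) :
    f x ≡ f y [SMOD (J • ⊤ : Submodule R N)] :=
  (h.map f).mono <| by rw [Submodule.map_smul'']; exact Submodule.smul_mono le_rfl le_top

instance IsPrecomplete.pi {R ι : Type*} [CommRing R] {I : Ideal R} [Finite ι] {M : ι → Type*}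
    [∀ i, AddCommGroup (M i)] [∀ i, Module R (M i)] [∀ i, IsPrecomplete I (M i)] :
    IsPrecomplete I (∀ i, M i) := by
  classical
  have := Fintype.ofFinite ι
  refine ⟨fun f hf => ?_⟩
  choose L hL using fun i => IsPrecomplete.prec inferInstance (I := I) (f := fun n => f n i)
    fun hmn => (hf hmn).map_smul_top (LinearMap.proj i)
  refine ⟨L, fun n => ?_⟩
  rw [SModEq.sub_mem, ← Finset.univ_sum_single (f n - L)]
  refine Submodule.sum_mem _ fun i _ => ?_
  simpa [SModEq.sub_mem, Pi.single_sub] using (hL i n).map_smul_top (LinearMap.single R M i)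

theorem Module.Finite.of_isHausdorff_of_finite_quotient {R M : Type*} [CommRing R]
    [AddCommGroup M] [Module R M] (I : Ideal R) [IsPrecomplete I R] [IsHausdorff I M]
    [Module.Finite R (M ⧸ (I • ⊤ : Submodule R M))] : Module.Finite R M := by
  obtain ⟨n, f, hf⟩ := Module.Finite.exists_fin' R (M ⧸ (I • ⊤ : Submodule R M))
  obtain ⟨g, hg⟩ := Module.projective_lifting_property (I • ⊤ : Submodule R M).mkQ f
    (Submodule.mkQ_surjective _)
  exact .of_surjective g (surjective_of_mkQ_comp_surjective (I := I) (hg ▸ hf))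

theorem IsHausdorff.of_smul_top_ne_top {R B : Type*} [CommRing R] [CommRing B] [IsDomain B]
    [IsNoetherianRing B] [Algebra R B] {I : Ideal R} (hI : (I • ⊤ : Submodule R B) ≠ ⊤) :
    IsHausdorff I B := by
  rw [← IsHausdorff.map_algebraMap_iff (S := B)]
  refine .of_isDomain _ fun h => hI ?_
  rw [Ideal.smul_top_eq_map, h, Submodule.restrictScalars_top]

theorem Module.Finite.of_finite_quotient_tensorProduct {R B : Type*} [CommRing R] (I : Ideal R)
    [IsPrecomplete I R] [CommRing B] [IsDomain B] [IsNoetherianRing B] [Algebra R B]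
    [Module.Finite R ((R ⧸ I) ⊗[R] B)] [Nontrivial ((R ⧸ I) ⊗[R] B)] :
    Module.Finite R B := by
  let e := quotTensorEquivQuotSMul B I
  have : Module.Finite R (B ⧸ (I • ⊤ : Submodule R B)) := .equiv e
  have : IsHausdorff I B := .of_smul_top_ne_top fun h => by
    have : Subsingleton (B ⧸ (I • ⊤ : Submodule R B)) :=
      Submodule.Quotient.subsingleton_iff.mpr h
    exact not_subsingleton _ e.toEquiv.subsingleton
  exact .of_isHausdorff_of_finite_quotient I

theorem Module.finite_of_isField_quotient_nilradical (k A : Type*) [Field k] [CommRing A]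
    [Algebra k A] [Algebra.FiniteType k A] (h : IsField (A ⧸ nilradical A)) :
    Module.Finite k A :=
  have := Ideal.Quotient.maximal_of_isField _ h
  have := Ring.KrullDimLE.of_isMaximal_nilradical (R := A)
  (Module.finite_iff_krullDimLE_zero k A).mpr this

attribute [local instance] Algebra.TensorProduct.rightAlgebra in
theorem isField_tensorProduct_of_isFractionRing {R K B : Type*} [CommRing R] [Field K]
    [Algebra R K] [IsFractionRing R K] [CommRing B] [IsDomain B] [Algebra R B]
    [Algebra.IsIntegral R B] [Nontrivial (K ⊗[R] B)] : IsField (K ⊗[R] B) := by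
  -- `K ⊗[R] B` is the localization of `B` at the image of the nonzero divisors of `R`.
  have : (0 : B) ∉ Algebra.algebraMapSubmonoid B (nonZeroDivisors R) := fun h =>
    not_subsingleton _ (IsLocalization.subsingleton (S := K ⊗[R] B) h)
  have := IsLocalization.isDomain_of_le_nonZeroDivisors (K ⊗[R] B)
    (le_nonZeroDivisors_of_noZeroDivisors this)
  exact (Algebra.IsIntegral.isField_iff_isField (algebraMap K (K ⊗[R] B)).injective).mp
    (Field.toIsField K)

theorem stmt6_general (V : Type) [CommRing V] [IsDomain V] [IsDiscreteValuationRing V]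
    [IsAdicComplete (IsLocalRing.maximalIdeal V) V]
    (B : Type) [CommRing B] [IsDomain B] [Algebra V B]
    (hft : Algebra.FiniteType V B)
    (hred : Nonempty
      (((IsLocalRing.ResidueField V ⊗[V] B) ⧸
          nilradical (IsLocalRing.ResidueField V ⊗[V] B)) ≃+*
        IsLocalRing.ResidueField V))
    (hK : Nontrivial (FractionRing V ⊗[V] B)) :
    IsField (FractionRing V ⊗[V] B) ∧
      Module.Finite (FractionRing V) (FractionRing V ⊗[V] B) := by
  obtain ⟨e⟩ := hred
  have : IsNoetherianRing B := Algebra.FiniteType.isNoetherianRing V B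
  have : Module.Finite (IsLocalRing.ResidueField V) (IsLocalRing.ResidueField V ⊗[V] B) :=
    Module.finite_of_isField_quotient_nilradical _ _ (e.toMulEquiv.isField (Field.toIsField _))
  have : Nontrivial (IsLocalRing.ResidueField V ⊗[V] B) :=
    have := e.toEquiv.nontrivial
    (Ideal.Quotient.mk (nilradical _)).domain_nontrivial
  have : Module.Finite V (IsLocalRing.ResidueField V ⊗[V] B) :=
    .trans (IsLocalRing.ResidueField V) _
  -- `IsLocalRing.ResidueField V` is by definition `V ⧸ IsLocalRing.maximalIdeal V`.
  have : Module.Finite V ((V ⧸ IsLocalRing.maximalIdeal V) ⊗[V] B) :=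
    ‹Module.Finite V (IsLocalRing.ResidueField V ⊗[V] B)›
  have : Nontrivial ((V ⧸ IsLocalRing.maximalIdeal V) ⊗[V] B) :=
    ‹Nontrivial (IsLocalRing.ResidueField V ⊗[V] B)›
  have : Module.Finite V B := .of_finite_quotient_tensorProduct (IsLocalRing.maximalIdeal V)
  exact ⟨isField_tensorProduct_of_isFractionRing, inferInstance⟩

/-- Let `V` be a complete DVR with fraction field `K` and algebraically
closed residue field `k`, and `B` a domain of finite type over `V` such that the
reduction of `B ⊗_V k` is isomorphic to `k` and `B ⊗_V K ≠ 0`. Then `B ⊗_V K` is a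
finite field extension of `K`. -/
theorem stmt6 (V : Type) [CommRing V] [IsDomain V] [IsDiscreteValuationRing V]
    [IsAdicComplete (IsLocalRing.maximalIdeal V) V]
    [IsAlgClosed (IsLocalRing.ResidueField V)]
    (B : Type) [CommRing B] [IsDomain B] [Algebra V B]
    (hft : Algebra.FiniteType V B)
    (hred : Nonempty
      (((IsLocalRing.ResidueField V ⊗[V] B) ⧸
          nilradical (IsLocalRing.ResidueField V ⊗[V] B)) ≃+*
        IsLocalRing.ResidueField V))
    (hK : Nontrivial (FractionRing V ⊗[V] B)) :
    IsField (FractionRing V ⊗[V] B) ∧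
      Module.Finite (FractionRing V) (FractionRing V ⊗[V] B) :=
  stmt6_general V B hft hred hK
end

section
/- Let M be a commutative integral (cancellative) monoid with group of units U, and suppose the group completion of the quotient monoid M/U (equivalently, M^{gp}/U) is a free abelian group. Then the projection M → M/U admits a monoid section s : M/U → M, and the induced map (M/U) × U → M, (p, u) ↦ s(p)·u, is an isomorphism of monoids. -/
/-!
Compose the embedding `f` of `M/Mˣ` into `F = ι →₀ ℤ` with `M → M/Mˣ` and extend it to the
Grothendieck group, `π : G(M) → F`. Its image is a subgroup of a free abelian group, hence free
(via the usual triangular basis attached to a well-ordering of `ι`), so `π` splits over its image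
and `f` lifts to `T : M/Mˣ → G(M)`. Since `M` is cancellative and `f` injective, an element of
`G(M)` whose image lies in `f(M/Mˣ)` already comes from `M`; so `T` factors through `M`, giving a
multiplicative section `s`. Any section makes `(p, u) ↦ s p * u` bijective.
-/

open Function

namespace Finsupp

open Set Submodule.IsPrincipal

variable {R ι : Type*} [CommRing R] [LinearOrder ι]

theorem eq_zero_or_exists_mem_supported_Iic (x : ι →₀ R) :
    x = 0 ∨ ∃ i ∈ x.support, x ∈ supported R R (Iic i) := by
  rcases x.support.eq_empty_or_nonempty with h | h
  · exact .inl (support_eq_empty.mp h)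
  · exact .inr ⟨_, x.support.max'_mem h,
      (mem_supported R x).mpr fun j hj => x.support.le_max' j hj⟩

theorem linearIndependent_of_triangular [IsDomain R] {s : Set ι} {e : ι → ι →₀ R}
    (hdiag : ∀ i ∈ s, e i i ≠ 0) (htri : ∀ i j, i < j → e i j = 0) :
    LinearIndependent R (fun i : s => e i) := by
  classical
  rw [linearIndependent_iff']
  intro t c hsum i hi
  by_contra hci
  set t' := t.filter (fun i => c i ≠ 0)
  have hne : t'.Nonempty := ⟨i, Finset.mem_filter.mpr ⟨hi, hci⟩⟩
  obtain ⟨hjt, hcj⟩ := Finset.mem_filter.mp (t'.max'_mem hne)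
  set j := t'.max' hne
  have hlead : ∑ k ∈ t, c k * e k j = c j * e j j := by
    refine Finset.sum_eq_single j (fun k hk hkj => ?_) (absurd hjt)
    by_cases hck : c k = 0
    · rw [hck, zero_mul]
    · have hkj' : k < j := lt_of_le_of_ne (t'.le_max' k (Finset.mem_filter.mpr ⟨hk, hck⟩)) hkj
      rw [htri k j hkj', mul_zero]
  have := congrArg (fun x : ι →₀ R => x j) hsum
  simp only [finsetSum_apply, smul_apply, smul_eq_mul, coe_zero, Pi.zero_apply, hlead] at this
  exact mul_ne_zero hcj (hdiag j j.2) this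

theorem mem_span_of_triangular [WellFoundedLT ι] {N : Submodule R (ι →₀ R)} {e : ι → ι →₀ R}
    (he : ∀ i, e i ∈ N ⊓ supported R R (Iic i))
    (hdvd : ∀ i, ∀ x ∈ N ⊓ supported R R (Iic i), e i i ∣ x i) {x : ι →₀ R} (hx : x ∈ N) :
    x ∈ Submodule.span R (e '' {i | e i i ≠ 0}) := by
  suffices key : ∀ i, ∀ x ∈ N ⊓ supported R R (Iic i),
      x ∈ Submodule.span R (e '' {i | e i i ≠ 0}) by
    obtain rfl | ⟨i, -, hi⟩ := eq_zero_or_exists_mem_supported_Iic x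
    exacts [Submodule.zero_mem _, key i x ⟨hx, hi⟩]
  -- Induction on the top of the support: subtracting a multiple of `e i` kills the coefficient at
  -- `i`, and `x - z` is then supported strictly below `i`.
  intro i
  induction i using WellFoundedLT.induction with
  | _ i ih =>
  intro x hx
  obtain ⟨c, hc⟩ := hdvd i x hx
  obtain ⟨z, hz, hzN, hzi⟩ : ∃ z ∈ Submodule.span R (e '' {i | e i i ≠ 0}),
      z ∈ N ⊓ supported R R (Iic i) ∧ z i = x i := by
    by_cases hei : e i i = 0
    · exact ⟨0, Submodule.zero_mem _, Submodule.zero_mem _, by simp [hc, hei]⟩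
    · exact ⟨c • e i, Submodule.smul_mem _ c (Submodule.subset_span ⟨i, hei, rfl⟩),
        Submodule.smul_mem _ c (he i), by simp [hc, mul_comm]⟩
  have hy : x - z ∈ N ⊓ supported R R (Iic i) := Submodule.sub_mem _ hx hzN
  rw [← sub_add_cancel x z]
  refine Submodule.add_mem _ ?_ hz
  obtain h0 | ⟨j, hj, hyj⟩ := eq_zero_or_exists_mem_supported_Iic (x - z)
  · rw [h0]; exact Submodule.zero_mem _
  · have hji : j < i := by
      refine lt_of_le_of_ne ((mem_supported R _).mp hy.2 hj) fun hji => ?_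
      subst hji
      exact mem_support_iff.mp hj (by simp [hzi])
    exact ih j hji _ ⟨hy.1, hyj⟩

variable [IsPrincipalIdealRing R]

theorem exists_mem_supported_Iic_dvd (N : Submodule R (ι →₀ R)) (i : ι) :
    ∃ e ∈ N ⊓ supported R R (Iic i), ∀ x ∈ N ⊓ supported R R (Iic i), e i ∣ x i := by
  set I : Ideal R := (N ⊓ supported R R (Iic i)).map (lapply i)
  obtain ⟨e, he, hei⟩ := Submodule.mem_map.mp (generator_mem I)
  refine ⟨e, he, fun x hx => ?_⟩
  rw [show e i = generator I from hei]
  exact generator_map_dvd_of_mem (lapply i) hx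

end Finsupp

open Finsupp Set in
instance Module.Free.submodule_finsupp {R ι : Type*} [CommRing R] [IsDomain R]
    [IsPrincipalIdealRing R] (N : Submodule R (ι →₀ R)) : Module.Free R N := by
  obtain ⟨_, _⟩ := exists_wellFoundedLT ι
  choose e he hdvd using exists_mem_supported_Iic_dvd N
  have htri : ∀ i j, i < j → e i j = 0 := fun i j hij =>
    (mem_supported' R _).mp (he i).2 j (not_le.mpr hij)
  have hspan : Submodule.span R (range fun i : {i | e i i ≠ 0} => e i) = N := by
    rw [← image_eq_range]
    refine le_antisymm (Submodule.span_le.mpr ?_) fun x hx => mem_span_of_triangular he hdvd hx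
    rintro _ ⟨i, -, rfl⟩
    exact (he i).1
  exact .of_basis ((Module.Basis.span (linearIndependent_of_triangular (fun i hi => hi) htri)).map
    (LinearEquiv.ofEq _ _ hspan))

theorem MonoidHom.exists_comp_eq_of_forall_mem_range {A G ι : Type*} [MulOneClass A]
    [CommGroup G] (φ : G →* Multiplicative (ι →₀ ℤ)) (f : A →* Multiplicative (ι →₀ ℤ))
    (hf : ∀ a, f a ∈ φ.range) : ∃ T : A →* G, φ.comp T = f := by
  set ψ : Additive G →ₗ[ℤ] ι →₀ ℤ := (MonoidHom.toAdditiveLeft φ).toIntLinearMap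
  obtain ⟨ρ, hρ⟩ := ψ.rangeRestrict.exists_rightInverse_of_surjective ψ.range_rangeRestrict
  let f' : Additive A →+ LinearMap.range ψ := (MonoidHom.toAdditiveLeft f).codRestrict _ hf
  refine ⟨MonoidHom.toAdditive.symm (ρ.toAddMonoidHom.comp f'), MonoidHom.ext fun a => ?_⟩
  exact congrArg Subtype.val (LinearMap.congr_fun hρ (f' (Additive.ofMul a)))

theorem MonoidHom.exists_comp_eq_of_injective {A B C : Type*} [MulOneClass A] [MulOneClass B]
    [MulOneClass C] {i : B →* C} (hi : Injective i) (T : A →* C) (hT : ∀ a, T a ∈ Set.range i) :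
    ∃ s : A →* B, i.comp s = T := by
  choose s hs using hT
  exact ⟨{ toFun := s, map_one' := hi (by simp [hs]), map_mul' := fun a b => hi (by simp [hs]) },
    MonoidHom.ext hs⟩

namespace Algebra.GrothendieckGroup

theorem lift_of {M G : Type*} [CommMonoid M] [CommGroup G] (f : M →* G) (m : M) :
    lift f (of m) = f m :=
  (Localization.monoidOf ⊤).lift_eq _ m

theorem mem_range_of_of_lift_mk_mem_range {M G : Type*} [CancelCommMonoid M] [CommGroup G]
    {f : Associates M →* G} (hf : Injective f) {x : GrothendieckGroup M}
    (hx : lift (f.comp Associates.mkMonoidHom) x ∈ Set.range f) : x ∈ Set.range of := by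
  obtain ⟨p, hp⟩ := hx
  obtain ⟨a, rfl⟩ := Associates.mk_surjective p
  obtain ⟨⟨c, d, _⟩, hcd⟩ := (Localization.monoidOf (⊤ : Submonoid M)).surj x
  change x * of d = of c at hcd
  have hmk : Associates.mk (a * d) = Associates.mk c := by
    apply hf
    have := congrArg (lift (f.comp Associates.mkMonoidHom)) hcd
    rwa [map_mul, ← hp, lift_of, lift_of, MonoidHom.comp_apply, MonoidHom.comp_apply,
      Associates.mkMonoidHom_apply, ← map_mul, Associates.mk_mul_mk] at this
  obtain ⟨u, hu⟩ := Associates.mk_eq_mk_iff_associated.mp hmk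
  refine ⟨a * u, mul_right_cancel (b := of d) ?_⟩
  rw [hcd, ← map_mul, ← hu, mul_right_comm]

end Algebra.GrothendieckGroup

namespace Associates

variable {M : Type*} [CancelCommMonoid M]

theorem bijective_mul_units_of_mk_comp_eq_id {s : Associates M → M}
    (hs : ∀ p, Associates.mk (s p) = p) :
    Bijective fun pu : Associates M × Mˣ => s pu.1 * (pu.2 : M) := by
  constructor
  · rintro ⟨p, u⟩ ⟨q, v⟩ (h : s p * u = s q * v)
    have hmk : ∀ (r : Associates M) (w : Mˣ), Associates.mk (s r * w) = r := fun r w => by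
      rw [mk_eq_mk_iff_associated.mpr (associated_mul_unit_left _ _ w.isUnit), hs]
    have hpq : p = q := by rw [← hmk p u, ← hmk q v, h]
    subst hpq
    exact Prod.ext rfl (Units.ext (mul_left_cancel h))
  · intro m
    obtain ⟨u, hu⟩ := mk_eq_mk_iff_associated.mp (hs (Associates.mk m))
    exact ⟨(Associates.mk m, u), hu⟩

open Algebra.GrothendieckGroup in
theorem exists_monoidHom_section_of_injective {ι : Type*}
    {f : Associates M →* Multiplicative (ι →₀ ℤ)} (hf : Injective f) :
    ∃ s : Associates M →* M, ∀ p, Associates.mk (s p) = p := by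
  set π := lift (f.comp Associates.mkMonoidHom)
  have hπ : ∀ a, π (of a) = f (Associates.mk a) := lift_of _
  obtain ⟨T, hT⟩ := π.exists_comp_eq_of_forall_mem_range f fun p => by
    obtain ⟨a, rfl⟩ := mk_surjective p
    exact ⟨of a, hπ a⟩
  obtain ⟨s, hs⟩ := MonoidHom.exists_comp_eq_of_injective of_injective T fun p =>
    mem_range_of_of_lift_mk_mem_range hf ⟨p, (DFunLike.congr_fun hT p).symm⟩
  refine ⟨s, fun p => hf ?_⟩
  rw [← hπ, ← DFunLike.congr_fun hT p, ← hs]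
  rfl

end Associates

/-- Let `M` be a cancellative commutative monoid with unit group `Mˣ`,
whose quotient by units `M/Mˣ` (realized as `Associates M`) has free abelian group
completion (equivalently, since `M` is cancellative, `M/Mˣ` embeds in a free abelian
group `ι →₀ ℤ`). Then the projection `M → M/Mˣ` admits a monoid section `s`, and
`(p, u) ↦ s(p)·u` is an isomorphism `(M/Mˣ) × Mˣ ≅ M`. -/
theorem stmt9 (M : Type) [CancelCommMonoid M]
    (ι : Type) (f : Associates M →* Multiplicative (ι →₀ ℤ))
    (hf : Function.Injective f) :
    ∃ s : Associates M →* M,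
      (∀ p, Associates.mk (s p) = p) ∧
      Function.Bijective (fun pu : Associates M × Mˣ => s pu.1 * (pu.2 : M)) := by
  obtain ⟨s, hs⟩ := Associates.exists_monoidHom_section_of_injective hf
  exact ⟨s, hs, Associates.bijective_mul_units_of_mk_comp_eq_id hs⟩
end

section
/- Let A be a commutative ring, let G = F ⊕ U be an abelian group where F is free abelian with basis p_1, ..., p_r and U is a subgroup, and let q = u + Σ_{i=1}^r n_i p_i with u ∈ U and integers n_i not all zero. Let n = gcd(n_1, ..., n_r) and suppose there exists v ∈ U with n·v = u. Then there is a group homomorphism s' : F → G which is a section of the projection G → F (i.e., composing with the projection is the identity on F) such that q lies in the image of s'. -/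
lemma bezout_finset {ι : Type*} [DecidableEq ι] (n : ι → ℤ) (s : Finset ι) :
    ∃ a : ι → ℤ, s.gcd n = ∑ i ∈ s, a i * n i := by
  induction s using Finset.induction_on with
  | empty => exact ⟨0, by simp⟩
  | @insert i s h ih =>
    obtain ⟨a, ha⟩ := ih
    rw [Finset.gcd_insert]
    have hb : GCDMonoid.gcd (n i) (s.gcd n) =
        n i * Int.gcdA (n i) (s.gcd n) + (s.gcd n) * Int.gcdB (n i) (s.gcd n) := by
      rw [← Int.coe_gcd, Int.gcd_eq_gcd_ab]
    refine ⟨fun j => if j = i then Int.gcdA (n i) (s.gcd n)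
      else a j * Int.gcdB (n i) (s.gcd n), ?_⟩
    rw [Finset.sum_insert h]
    beta_reduce
    rw [if_pos rfl, hb, ha, Finset.sum_mul]
    congr 1
    · ring
    · refine Finset.sum_congr rfl fun j hj => ?_
      beta_reduce
      rw [if_neg (fun hji : j = i => h (hji ▸ hj))]; ring

/-- Let `G = F ⊕ U` with `F = ℤ^r` free abelian on the standard basis
`p_i = Pi.single i 1` and `U` an abelian group, and let `q = (Σ n_i p_i, u)` with the
`n_i` not all zero. If `n = gcd(n_i)` and `u = n·v` for some `v ∈ U`, then there is a
group-homomorphism section `s' : F → F ⊕ U` of the projection with `q` in its image. -/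
theorem stmt10 (r : ℕ) (U : Type) [AddCommGroup U]
    (n : Fin r → ℤ) (hn : n ≠ 0) (u : U)
    (v : U) (hv : (Finset.univ.gcd n) • v = u) :
    ∃ s' : (Fin r → ℤ) →+ (Fin r → ℤ) × U,
      (∀ x, (s' x).1 = x) ∧
      ((∑ i, n i • Pi.single i (1 : ℤ), u) ∈ Set.range s') := by
  obtain ⟨a, ha⟩ := bezout_finset n Finset.univ
  let f : (Fin r → ℤ) →+ U := AddMonoidHom.mk' (fun x => (∑ i, a i * x i) • v)
    (fun x y => by
      simp only [Pi.add_apply, mul_add, Finset.sum_add_distrib, add_smul])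
  refine ⟨(AddMonoidHom.id _).prod f, fun x => rfl, ⟨∑ i, n i • Pi.single i (1 : ℤ), ?_⟩⟩
  have key : ∀ j, (∑ i, n i • Pi.single i (1 : ℤ)) j = n j := by
    intro j
    rw [Finset.sum_apply]
    simp [Pi.single_apply]
  simp only [AddMonoidHom.prod_apply, AddMonoidHom.id_apply, Prod.mk.injEq, f,
    AddMonoidHom.mk'_apply]
  refine ⟨trivial, ?_⟩
  rw [← hv, ha]
  congr 1
  exact Finset.sum_congr rfl fun j _ => by rw [key j]
end
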